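/- arXiv:2412.19436 — 3 statements merged into one kernel-verified Lean document; each statement's English description precedes it below -/
import Mathlib

section
/- Let d_x, d_φ, r be positive integers with r ≤ min(d_x, d_φ), let Θ ∈ ℝ^{d_x×d_φ}, x ∈ ℝ^{d_x}, φ ∈ ℝ^{d_φ}, and let Û ∈ ℝ^{d_x×d_x}, V̂ ∈ ℝ^{d_φ×d_φ} be orthogonal matrices. Set Z = x φᵀ, Z_r = Ûᵀ Z V̂, Θ_r = Ûᵀ Θ V̂, and let z_rtv and θ_rtv be the rotation-truncation-vectorizations of Z and Θ. Then the approximation error of the reduced-space reward satisfies |xᵀ Θ φ − ⟨z_rtv, θ_rtv⟩| ≤ ‖x‖₂ · ‖φ‖₂ · ‖(Θ_r)_{22}‖_F. -/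
/-! Writing the Frobenius inner product as `vec A ⬝ᵥ vec B`, the reward is
`x ⬝ᵥ Θ φ = ⟨x φᵀ, Θ⟩_F`, and rotating both arguments by `Ûᵀ · V̂` does not change it, so it
equals `⟨Z_r, Θ_r⟩_F`. Splitting into blocks, this is `⟨z_rtv, θ_rtv⟩` plus the inner product
of the (2,2) blocks, which Cauchy–Schwarz bounds by `‖(Z_r)₂₂‖_F ‖(Θ_r)₂₂‖_F`; finally
`‖(Z_r)₂₂‖_F ≤ ‖Z_r‖_F = ‖Z‖_F = ‖x‖₂ ‖φ‖₂`. -/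

open Matrix

/-- The rotation-truncation-vectorization of a matrix indexed by the split index
types `Fin r ⊕ Fin a` and `Fin r ⊕ Fin b`: it keeps the (1,1), (1,2) and (2,1)
blocks (vectorized) and discards the (2,2) block. -/
def rtv {r a b : ℕ} (M : Matrix (Fin r ⊕ Fin a) (Fin r ⊕ Fin b) ℝ) :
    (Fin r × Fin r) ⊕ (Fin r × Fin b) ⊕ (Fin a × Fin r) → ℝ :=
  fun idx =>
    match idx with
    | Sum.inl (i, j) => M (Sum.inl i) (Sum.inl j)
    | Sum.inr (Sum.inl (i, j)) => M (Sum.inl i) (Sum.inr j)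
    | Sum.inr (Sum.inr (i, j)) => M (Sum.inr i) (Sum.inl j)

namespace Matrix

variable {m n p q R : Type*} [Fintype m] [Fintype n]

theorem dotProduct_self_nonneg_real (v : n → ℝ) : 0 ≤ v ⬝ᵥ v := by
  simpa using dotProduct_self_star_nonneg v

theorem abs_dotProduct_le_sqrt_mul_sqrt (v w : n → ℝ) :
    |v ⬝ᵥ w| ≤ √(v ⬝ᵥ v) * √(w ⬝ᵥ w) := by
  rw [← Real.sqrt_mul (dotProduct_self_nonneg_real v)]
  apply Real.abs_le_sqrt
  simpa only [dotProduct, sq] using Finset.sum_mul_sq_le_sq_mul_sq Finset.univ v w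

theorem vec_dotProduct_vec_eq_sum_sum [AddCommMonoid R] [Mul R] (A B : Matrix m n R) :
    vec A ⬝ᵥ vec B = ∑ i, ∑ j, A i j * B i j := by
  simp only [dotProduct, vec, Fintype.sum_prod_type]
  exact Finset.sum_comm

theorem vec_dotProduct_vec_self (A : Matrix m n ℝ) :
    vec A ⬝ᵥ vec A = ∑ i, ∑ j, A i j ^ 2 := by
  simp only [vec_dotProduct_vec_eq_sum_sum, sq]

variable [CommSemiring R]

theorem dotProduct_mulVec_eq_vec_vecMulVec_dotProduct_vec (x : m → R) (Θ : Matrix m n R)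
    (φ : n → R) : x ⬝ᵥ (Θ *ᵥ φ) = vec (vecMulVec x φ) ⬝ᵥ vec Θ := by
  rw [vec_dotProduct_vec_eq_sum_sum]
  simp only [dotProduct, mulVec, vecMulVec_apply, Finset.mul_sum]
  exact Finset.sum_congr rfl fun _ _ => Finset.sum_congr rfl fun _ _ => by ring

theorem vec_vecMulVec_dotProduct_vec_vecMulVec (x y : m → R) (φ ψ : n → R) :
    vec (vecMulVec x φ) ⬝ᵥ vec (vecMulVec y ψ) = (x ⬝ᵥ y) * (φ ⬝ᵥ ψ) := by
  rw [vec_dotProduct_vec_eq_sum_sum]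
  simp only [dotProduct, vecMulVec_apply, Finset.sum_mul_sum]
  exact Finset.sum_congr rfl fun _ _ => Finset.sum_congr rfl fun _ _ => by ring

theorem vec_dotProduct_vec_transpose_mul_mul [Fintype p] [Fintype q] [DecidableEq m]
    [DecidableEq n] {U : Matrix m p R} {V : Matrix n q R} (hU : U * Uᵀ = 1) (hV : V * Vᵀ = 1)
    (A B : Matrix m n R) :
    vec (Uᵀ * A * V) ⬝ᵥ vec (Uᵀ * B * V) = vec A ⬝ᵥ vec B := by
  have hconj : (Uᵀ * A * V)ᵀ * (Uᵀ * B * V) = Vᵀ * (Aᵀ * B) * V := by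
    simp only [transpose_mul, transpose_transpose, Matrix.mul_assoc]
    rw [← Matrix.mul_assoc U, hU, Matrix.one_mul]
  rw [vec_dotProduct_vec, vec_dotProduct_vec, hconj, trace_mul_cycle, ← Matrix.mul_assoc, hV,
    Matrix.one_mul]

end Matrix

theorem vec_dotProduct_vec_eq_rtv_dotProduct_rtv_add {r a b : ℕ}
    (M N : Matrix (Fin r ⊕ Fin a) (Fin r ⊕ Fin b) ℝ) :
    vec M ⬝ᵥ vec N = rtv M ⬝ᵥ rtv N + vec M.toBlocks₂₂ ⬝ᵥ vec N.toBlocks₂₂ := by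
  rw [vec_dotProduct_vec_eq_sum_sum, vec_dotProduct_vec_eq_sum_sum]
  simp only [dotProduct, rtv, toBlocks₂₂, of_apply, Fintype.sum_prod_type, Fintype.sum_sum_type,
    Finset.sum_add_distrib]
  ring

theorem vec_toBlocks₂₂_dotProduct_self_le {r a b : ℕ}
    (M : Matrix (Fin r ⊕ Fin a) (Fin r ⊕ Fin b) ℝ) :
    vec M.toBlocks₂₂ ⬝ᵥ vec M.toBlocks₂₂ ≤ vec M ⬝ᵥ vec M := by
  rw [vec_dotProduct_vec_eq_rtv_dotProduct_rtv_add M M]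
  exact le_add_of_nonneg_left (dotProduct_self_nonneg_real _)

theorem reward_rtv_error_bound_general (dx dφ r : ℕ)
    (Θ : Matrix (Fin dx) (Fin dφ) ℝ) (x : Fin dx → ℝ) (φ : Fin dφ → ℝ)
    (Uh : Matrix (Fin dx) (Fin r ⊕ Fin (dx - r)) ℝ)
    (Vh : Matrix (Fin dφ) (Fin r ⊕ Fin (dφ - r)) ℝ)
    (hUo' : Uh * Uhᵀ = 1)
    (hVo' : Vh * Vhᵀ = 1)
    (Z : Matrix (Fin dx) (Fin dφ) ℝ) (hZ : Z = vecMulVec x φ)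
    (Zr : Matrix (Fin r ⊕ Fin (dx - r)) (Fin r ⊕ Fin (dφ - r)) ℝ)
    (hZr : Zr = Uhᵀ * Z * Vh)
    (Θr : Matrix (Fin r ⊕ Fin (dx - r)) (Fin r ⊕ Fin (dφ - r)) ℝ)
    (hΘr : Θr = Uhᵀ * Θ * Vh) :
    |x ⬝ᵥ (Θ *ᵥ φ) - rtv Zr ⬝ᵥ rtv Θr| ≤
      Real.sqrt (x ⬝ᵥ x) * Real.sqrt (φ ⬝ᵥ φ) *
        Real.sqrt (∑ i, ∑ j, (Θr.toBlocks₂₂ i j) ^ 2) := by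
  have hsplit : x ⬝ᵥ (Θ *ᵥ φ) =
      rtv Zr ⬝ᵥ rtv Θr + vec Zr.toBlocks₂₂ ⬝ᵥ vec Θr.toBlocks₂₂ := by
    rw [dotProduct_mulVec_eq_vec_vecMulVec_dotProduct_vec, ← hZ,
      ← vec_dotProduct_vec_transpose_mul_mul hUo' hVo', ← hZr, ← hΘr,
      vec_dotProduct_vec_eq_rtv_dotProduct_rtv_add]
  have hZ₂₂ : vec Zr.toBlocks₂₂ ⬝ᵥ vec Zr.toBlocks₂₂ ≤ (x ⬝ᵥ x) * (φ ⬝ᵥ φ) :=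
    calc vec Zr.toBlocks₂₂ ⬝ᵥ vec Zr.toBlocks₂₂ ≤ vec Zr ⬝ᵥ vec Zr :=
          vec_toBlocks₂₂_dotProduct_self_le Zr
      _ = vec Z ⬝ᵥ vec Z := by rw [hZr, vec_dotProduct_vec_transpose_mul_mul hUo' hVo']
      _ = (x ⬝ᵥ x) * (φ ⬝ᵥ φ) := by rw [hZ, vec_vecMulVec_dotProduct_vec_vecMulVec]
  rw [hsplit, add_sub_cancel_left, ← vec_dotProduct_vec_self,
    ← Real.sqrt_mul (dotProduct_self_nonneg_real x)]
  calc |vec Zr.toBlocks₂₂ ⬝ᵥ vec Θr.toBlocks₂₂|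
      ≤ √(vec Zr.toBlocks₂₂ ⬝ᵥ vec Zr.toBlocks₂₂) * √(vec Θr.toBlocks₂₂ ⬝ᵥ vec Θr.toBlocks₂₂) :=
        abs_dotProduct_le_sqrt_mul_sqrt _ _
    _ ≤ _ := by gcongr

/-- **Approximation error of the reduced-space reward.**
With `Z = xφᵀ`, `Z_r = Ûᵀ Z V̂`, `Θ_r = Ûᵀ Θ V̂` for orthogonal `Û`, `V̂`, the
reduced-space reward satisfies
`|xᵀΘφ − ⟨z_rtv, θ_rtv⟩| ≤ ‖x‖₂ ‖φ‖₂ ‖(Θ_r)₂₂‖_F`. -/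
theorem reward_rtv_error_bound (dx dφ r : ℕ)
    (hdx : 0 < dx) (hdφ : 0 < dφ) (hr : 0 < r) (hrx : r ≤ dx) (hrφ : r ≤ dφ)
    (Θ : Matrix (Fin dx) (Fin dφ) ℝ) (x : Fin dx → ℝ) (φ : Fin dφ → ℝ)
    (Uh : Matrix (Fin dx) (Fin r ⊕ Fin (dx - r)) ℝ)
    (Vh : Matrix (Fin dφ) (Fin r ⊕ Fin (dφ - r)) ℝ)
    (hUo : Uhᵀ * Uh = 1) (hUo' : Uh * Uhᵀ = 1)
    (hVo : Vhᵀ * Vh = 1) (hVo' : Vh * Vhᵀ = 1)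
    (Z : Matrix (Fin dx) (Fin dφ) ℝ) (hZ : Z = vecMulVec x φ)
    (Zr : Matrix (Fin r ⊕ Fin (dx - r)) (Fin r ⊕ Fin (dφ - r)) ℝ)
    (hZr : Zr = Uhᵀ * Z * Vh)
    (Θr : Matrix (Fin r ⊕ Fin (dx - r)) (Fin r ⊕ Fin (dφ - r)) ℝ)
    (hΘr : Θr = Uhᵀ * Θ * Vh) :
    |x ⬝ᵥ (Θ *ᵥ φ) - rtv Zr ⬝ᵥ rtv Θr| ≤
      Real.sqrt (x ⬝ᵥ x) * Real.sqrt (φ ⬝ᵥ φ) *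
        Real.sqrt (∑ i, ∑ j, (Θr.toBlocks₂₂ i j) ^ 2) :=
  reward_rtv_error_bound_general dx dφ r Θ x φ Uh Vh hUo' hVo' Z hZ Zr hZr Θr hΘr
end

section
/- There exists an absolute constant C₂ > 0 with the following property. Let d_x, d_φ, r be positive integers with r ≤ min(d_x, d_φ). Let Θ* ∈ ℝ^{d_x×d_φ} have rank r with nonzero singular values σ_1 ≥ σ_2 ≥ … ≥ σ_r > 0. Let Θ̂ ∈ ℝ^{d_x×d_φ} have singular value decomposition Θ̂ = Û D̂ V̂ᵀ, where Û ∈ ℝ^{d_x×d_x} and V̂ ∈ ℝ^{d_φ×d_φ} are orthogonal and D̂ ∈ ℝ^{d_x×d_φ} is zero off the diagonal with nonincreasing nonnegative diagonal entries. Suppose ‖Θ̂ − Θ*‖_F ≤ B for some B with 0 < B ≤ σ_r/2. Then the (2,2) block of the rotation of Θ* with respect to the estimated subspaces satisfies ‖(Θ*_r)_{22}‖_F ≤ C₂ · (σ_1 / σ_r²) · B², where Θ*_r = Ûᵀ Θ* V̂ and (Θ*_r)_{22} ∈ ℝ^{(d_x−r)×(d_φ−r)} is its lower-right block. -/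
/-!
Work in the frame of the estimated singular vectors. There `D̂ = Ûᵀ Θ̂ V̂` is rectangular diagonal,
`F = D̂ - A` with `A = Ûᵀ Θ* V̂` has `‖F‖_F ≤ B`, and `A = X₁ Σ Y₁ᵀ` with `Σ = diag(σ₁, …, σ_r)`,
where `X₁ = Ûᵀ U*₁` and `Y₁ = V̂ᵀ V*₁` (`U*₁`, `V*₁` the first `r` columns of `U*`, `V*`) have
orthonormal columns. Write `x`, `y` for the Frobenius norms of the rows of `X₁`, `Y₁` with
index `> r`; then `‖A₂₂‖ ≤ σ₁ x y`.
Since `rank A ≤ r`, Weyl's inequality bounds every diagonal entry of `D̂` beyond the `r`-th by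
`‖F‖`. Reading the rows `> r` of `(D̂ - F) Y₁ = X₁ Σ` and of its transpose counterpart gives
`σ_r x ≤ ‖F‖ y + ‖F‖` and `σ_r y ≤ ‖F‖ x + ‖F‖`; as `2‖F‖ ≤ σ_r`, this forces
`σ_r² x y ≤ 4 ‖F‖²`, so `C₂ = 4` works.
-/

open Matrix
open scoped Matrix.Norms.Frobenius

theorem Finset.sq_sum_eq_sum_sq_of_mul_eq_zero {ι R : Type*} [CommSemiring R] (s : Finset ι)
    (a : ι → R) (ha : ∀ i ∈ s, ∀ j ∈ s, i ≠ j → a i * a j = 0) :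
    (∑ i ∈ s, a i) ^ 2 = ∑ i ∈ s, a i ^ 2 := by
  rw [sq, Finset.sum_mul_sum]
  refine Finset.sum_congr rfl fun i hi => ?_
  rw [Finset.sum_eq_single_of_mem i hi fun j hj hji => ha i hi j hj hji.symm, sq]

theorem sq_mul_mul_le_of_le_mul_add {x y b σ : ℝ} (hx : 0 ≤ x) (hy : 0 ≤ y) (hb : 0 ≤ b)
    (hbσ : 2 * b ≤ σ) (hxy : σ * x ≤ b * y + b) (hyx : σ * y ≤ b * x + b) :
    σ ^ 2 * (x * y) ≤ 4 * b ^ 2 := by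
  have hsum : σ * (x + y) ≤ 4 * b := by nlinarith
  have hsum0 : 0 ≤ σ * (x + y) := by nlinarith
  nlinarith [sq_nonneg (x - y), pow_le_pow_left₀ hsum0 hsum 2]

namespace Matrix

theorem transpose_mul_transpose_mul_self {l m p : Type*} [Fintype l] [Fintype m] [DecidableEq m]
    [DecidableEq p] {U : Matrix m l ℝ} {V : Matrix m p ℝ} (hU : U * Uᵀ = 1) (hV : Vᵀ * V = 1) :
    (Uᵀ * V)ᵀ * (Uᵀ * V) = 1 := by
  rw [transpose_mul, transpose_transpose, Matrix.mul_assoc, ← Matrix.mul_assoc U, hU,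
    Matrix.one_mul, hV]

theorem transpose_mul_mul_transpose_self {l m n : Type*} [Fintype m] [Fintype n] [DecidableEq l]
    [DecidableEq m] {U : Matrix m l ℝ} {V : Matrix m n ℝ} (hU : Uᵀ * U = 1) (hV : V * Vᵀ = 1) :
    (Uᵀ * V) * (Uᵀ * V)ᵀ = 1 := by
  rw [transpose_mul, transpose_transpose, Matrix.mul_assoc, ← Matrix.mul_assoc V, hV,
    Matrix.one_mul, hU]

section

variable {l m n p : Type*} [Fintype l] [Fintype m] [Fintype n] [Fintype p]

theorem frobenius_norm_eq_sqrt (M : Matrix m n ℝ) : ‖M‖ = √(∑ i, ∑ j, M i j ^ 2) := by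
  simp [frobenius_norm_def, Real.sqrt_eq_rpow]

theorem frobenius_norm_sq_eq_sum (M : Matrix m n ℝ) : ‖M‖ ^ 2 = ∑ i, ∑ j, M i j ^ 2 := by
  rw [frobenius_norm_eq_sqrt, Real.sq_sqrt (by positivity)]

theorem frobenius_norm_sq_eq_trace (M : Matrix m n ℝ) : ‖M‖ ^ 2 = trace (Mᵀ * M) := by
  rw [frobenius_norm_sq_eq_sum, Finset.sum_comm]
  simp [trace, mul_apply, sq]

theorem frobenius_norm_mul_of_transpose_mul_self [DecidableEq m] {U : Matrix l m ℝ}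
    (hU : Uᵀ * U = 1) (M : Matrix m n ℝ) : ‖U * M‖ = ‖M‖ := by
  refine (sq_eq_sq₀ (norm_nonneg _) (norm_nonneg _)).1 ?_
  rw [frobenius_norm_sq_eq_trace, frobenius_norm_sq_eq_trace, transpose_mul, Matrix.mul_assoc,
    ← Matrix.mul_assoc Uᵀ, hU, Matrix.one_mul]

theorem frobenius_norm_mul_of_mul_transpose_self [DecidableEq n] {V : Matrix n p ℝ}
    (hV : V * Vᵀ = 1) (M : Matrix m n ℝ) : ‖M * V‖ = ‖M‖ := by
  rw [← frobenius_norm_transpose, transpose_mul,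
    frobenius_norm_mul_of_transpose_mul_self (by rwa [transpose_transpose]),
    frobenius_norm_transpose]

theorem frobenius_norm_transpose_mul_mul [DecidableEq m] [DecidableEq n] {U : Matrix m l ℝ}
    {V : Matrix n p ℝ} (hU : U * Uᵀ = 1) (hV : V * Vᵀ = 1) (M : Matrix m n ℝ) :
    ‖Uᵀ * M * V‖ = ‖M‖ := by
  rw [frobenius_norm_mul_of_mul_transpose_self hV,
    frobenius_norm_mul_of_transpose_mul_self (by rwa [transpose_transpose])]

theorem le_frobenius_norm_diagonal_mul [DecidableEq m] {d : m → ℝ} {c : ℝ} (hc : 0 ≤ c)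
    (hd : ∀ i, c ≤ |d i|) (M : Matrix m n ℝ) : c * ‖M‖ ≤ ‖diagonal d * M‖ := by
  rw [← pow_le_pow_iff_left₀ (by positivity) (norm_nonneg _) two_ne_zero, mul_pow,
    frobenius_norm_sq_eq_sum, frobenius_norm_sq_eq_sum, Finset.mul_sum]
  refine Finset.sum_le_sum fun i _ => ?_
  rw [Finset.mul_sum]
  refine Finset.sum_le_sum fun j _ => ?_
  rw [diagonal_mul, mul_pow, ← sq_abs (d i)]
  gcongr
  exact hd i

theorem le_frobenius_norm_mul_diagonal [DecidableEq n] {d : n → ℝ} {c : ℝ} (hc : 0 ≤ c)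
    (hd : ∀ j, c ≤ |d j|) (M : Matrix m n ℝ) : c * ‖M‖ ≤ ‖M * diagonal d‖ := by
  rw [← frobenius_norm_transpose M, ← frobenius_norm_transpose (M * _), transpose_mul,
    diagonal_transpose]
  exact le_frobenius_norm_diagonal_mul hc hd _

end

variable {m n q r : ℕ}

def IsRectDiag {R : Type*} [Zero R] (D : Matrix (Fin m) (Fin n) R) : Prop :=
  ∀ (i : Fin m) (j : Fin n), (i : ℕ) ≠ j → D i j = 0

theorem IsRectDiag.transpose {R : Type*} [Zero R] {D : Matrix (Fin m) (Fin n) R}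
    (hD : IsRectDiag D) : IsRectDiag Dᵀ := fun j i hji => hD i j (Ne.symm hji)

theorem isRectDiag_diagonal (d : Fin n → ℝ) : IsRectDiag (diagonal d) := fun _ _ hij =>
  diagonal_apply_ne _ fun h => hij (congrArg Fin.val h)

theorem IsRectDiag.sum_sq_apply_le {D : Matrix (Fin m) (Fin n) ℝ} (hD : IsRectDiag D) {c : ℝ}
    (hDc : ∀ i j, |D i j| ≤ c) (j : Fin n) : ∑ i, D i j ^ 2 ≤ c ^ 2 := by
  by_cases hj : (j : ℕ) < m
  · rw [Fintype.sum_eq_single ⟨j, hj⟩ fun i hi => by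
      rw [hD i j fun h => hi (Fin.ext h), sq, zero_mul]]
    exact sq_le_sq' (abs_le.1 (hDc _ _)).1 (abs_le.1 (hDc _ _)).2
  · rw [Fintype.sum_eq_zero _ fun i => by rw [hD i j (by omega), sq, zero_mul]]
    positivity

theorem IsRectDiag.frobenius_norm_mul_left_le {p : Type*} [Fintype p]
    {D : Matrix (Fin m) (Fin n) ℝ} (hD : IsRectDiag D) {c : ℝ} (hc : 0 ≤ c)
    (hDc : ∀ i j, |D i j| ≤ c) (M : Matrix (Fin n) p ℝ) : ‖D * M‖ ≤ c * ‖M‖ := by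
  rw [← pow_le_pow_iff_left₀ (norm_nonneg _) (by positivity) two_ne_zero, mul_pow,
    frobenius_norm_sq_eq_sum, frobenius_norm_sq_eq_sum]
  -- each row of `D` has at most one nonzero entry, so the cross terms vanish
  have hrow : ∀ i k, (D * M) i k ^ 2 = ∑ j, D i j ^ 2 * M j k ^ 2 := fun i k => by
    rw [mul_apply, Finset.sq_sum_eq_sum_sq_of_mul_eq_zero]
    · simp only [mul_pow]
    · intro j _ j' _ hjj'
      by_cases h : (i : ℕ) = j
      · rw [hD i j' fun h' => hjj' (Fin.ext (h.symm.trans h'))]; ring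
      · rw [hD i j h]; ring
  calc ∑ i, ∑ k, (D * M) i k ^ 2 = ∑ j, (∑ i, D i j ^ 2) * ∑ k, M j k ^ 2 := by
        simp only [hrow, Finset.sum_mul, Finset.mul_sum]
        rw [Finset.sum_congr rfl fun i _ => Finset.sum_comm, Finset.sum_comm]
        exact Finset.sum_congr rfl fun j _ => Finset.sum_comm
    _ ≤ ∑ j, c ^ 2 * ∑ k, M j k ^ 2 := by
        gcongr with j
        exact hD.sum_sq_apply_le hDc j
    _ = c ^ 2 * ∑ j, ∑ k, M j k ^ 2 := by rw [Finset.mul_sum]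

theorem IsRectDiag.frobenius_norm_mul_right_le {p : Type*} [Fintype p]
    {D : Matrix (Fin m) (Fin n) ℝ} (hD : IsRectDiag D) {c : ℝ} (hc : 0 ≤ c)
    (hDc : ∀ i j, |D i j| ≤ c) (M : Matrix p (Fin m) ℝ) : ‖M * D‖ ≤ c * ‖M‖ := by
  rw [← frobenius_norm_transpose, transpose_mul, ← frobenius_norm_transpose M]
  exact hD.transpose.frobenius_norm_mul_left_le hc (fun j i => hDc i j) _

def finIncl (h : q ≤ n) : Matrix (Fin n) (Fin q) ℝ :=
  (1 : Matrix (Fin n) (Fin n) ℝ).submatrix id (Fin.castLE h)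

theorem finIncl_apply (h : q ≤ n) (i : Fin n) (k : Fin q) :
    finIncl h i k = if (i : ℕ) = k then 1 else 0 := by
  simp [finIncl, one_apply, Fin.ext_iff]

theorem finIncl_transpose_mul_self (h : q ≤ n) : (finIncl h)ᵀ * finIncl h = 1 := by
  rw [finIncl, transpose_submatrix, transpose_one, ← submatrix_mul _ _ _ _ _ Function.bijective_id,
    Matrix.one_mul, submatrix_one _ (Fin.castLE_injective h)]

theorem frobenius_norm_mul_finIncl_le {p : Type*} [Fintype p] (h : q ≤ n)
    (M : Matrix p (Fin n) ℝ) : ‖M * finIncl h‖ ≤ ‖M‖ := by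
  refine (IsRectDiag.frobenius_norm_mul_right_le (fun i k hik => ?_) zero_le_one (fun i k => ?_)
    M).trans_eq (one_mul _)
  · simp [finIncl_apply, hik]
  · rw [finIncl_apply]; split_ifs <;> norm_num

theorem IsRectDiag.mul_finIncl {D : Matrix (Fin m) (Fin n) ℝ} (hD : IsRectDiag D) (hm : q ≤ m)
    (hn : q ≤ n) :
    D * finIncl hn = finIncl hm * diagonal fun k => D (Fin.castLE hm k) (Fin.castLE hn k) := by
  ext i k
  rw [mul_diagonal]
  simp only [finIncl, mul_apply, submatrix_apply, id, one_apply, mul_ite, mul_one,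
    mul_zero, Finset.sum_ite_eq', Finset.mem_univ, if_true]
  split_ifs with h
  · rw [h, one_mul]
  · rw [zero_mul]; exact hD _ _ fun h' => h (Fin.ext h')

theorem eq_finIncl_mul_diagonal_mul_transpose {D : Matrix (Fin m) (Fin n) ℝ} {σ : ℕ → ℝ}
    (hm : q ≤ m) (hn : q ≤ n)
    (hD : ∀ (i : Fin m) (j : Fin n), D i j = if (i : ℕ) = j ∧ (i : ℕ) < q then σ i else 0) :
    D = finIncl hm * diagonal (fun k : Fin q => σ k) * (finIncl hn)ᵀ := by
  ext i j
  rw [hD, mul_apply]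
  simp only [mul_diagonal, transpose_apply, finIncl_apply]
  split_ifs with hij
  · rw [Finset.sum_eq_single ⟨i, hij.2⟩]
    · simp [hij.1]
    · intro k _ hk
      have hk' : (i : ℕ) ≠ k := fun h => hk (Fin.ext h.symm)
      simp [hk']
    · simp
  · refine (Finset.sum_eq_zero fun k _ => ?_).symm
    split_ifs with h1 h2
    · exact absurd ⟨by omega, by omega⟩ hij
    all_goals ring

theorem exists_ne_zero_mul_eq_zero_of_rank_lt {ι K : Type*} [Fintype ι] [Field K]
    (M : Matrix ι (Fin n) K) (h : M.rank < n) :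
    ∃ u : Matrix (Fin n) (Fin 1) K, u ≠ 0 ∧ M * u = 0 := by
  have hker : LinearMap.ker M.mulVecLin ≠ ⊥ := fun hbot => by
    have := M.mulVecLin.finrank_range_add_finrank_ker
    rw [hbot, finrank_bot, Module.finrank_fin_fun] at this
    exact h.ne (by rw [rank]; omega)
  obtain ⟨v, hv, hv0⟩ := Submodule.exists_mem_ne_zero_of_ne_bot hker
  refine ⟨replicateCol (Fin 1) v, by simpa using hv0, ?_⟩
  rw [← replicateCol_mulVec, show M *ᵥ v = 0 from hv, replicateCol_zero]

/-- Weyl's inequality `σ_{q+1}(D) ≤ ‖D - A‖_F` for `rank A ≤ q`, tested on a vector in the span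
of the first `q + 1` coordinates that `A` annihilates. -/
theorem IsRectDiag.le_frobenius_norm_sub_of_rank_le {D A : Matrix (Fin m) (Fin n) ℝ}
    (hD : IsRectDiag D) (hqm : q < m) (hqn : q < n) {s : ℝ} (hs : 0 ≤ s)
    (hsD : ∀ k : Fin (q + 1), s ≤ |D (Fin.castLE hqm k) (Fin.castLE hqn k)|) (hA : A.rank ≤ q) :
    s ≤ ‖D - A‖ := by
  obtain ⟨u, hu0, hAu⟩ := exists_ne_zero_mul_eq_zero_of_rank_lt (A * finIncl hqn)
    ((rank_mul_le_left _ _).trans_lt (Nat.lt_succ_of_le hA))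
  refine le_of_mul_le_mul_right ?_ (norm_pos_iff.2 hu0)
  calc s * ‖u‖ ≤ ‖diagonal (fun k => D (Fin.castLE hqm k) (Fin.castLE hqn k)) * u‖ :=
        le_frobenius_norm_diagonal_mul hs hsD u
    _ = ‖(D - A) * (finIncl hqn * u)‖ := by
        rw [Matrix.sub_mul, ← Matrix.mul_assoc, ← Matrix.mul_assoc, hAu, sub_zero,
          hD.mul_finIncl hqm, Matrix.mul_assoc,
          frobenius_norm_mul_of_transpose_mul_self (finIncl_transpose_mul_self hqm)]
    _ ≤ ‖D - A‖ * ‖u‖ := by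
        refine (frobenius_norm_mul _ _).trans_eq ?_
        rw [frobenius_norm_mul_of_transpose_mul_self (finIncl_transpose_mul_self hqn)]

theorem IsRectDiag.abs_apply_le_frobenius_norm_sub_of_rank_le {D A : Matrix (Fin m) (Fin n) ℝ}
    (hD : IsRectDiag D) (hDnn : ∀ i j, 0 ≤ D i j)
    (hDmono : ∀ (i i' : Fin m) (j j' : Fin n), (i : ℕ) = (j : ℕ) → (i' : ℕ) = (j' : ℕ) →
      (i : ℕ) ≤ (i' : ℕ) → D i' j' ≤ D i j)
    (hA : A.rank ≤ r) (i : Fin m) (j : Fin n) (hi : r ≤ (i : ℕ)) :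
    |D i j| ≤ ‖D - A‖ := by
  by_cases hij : (i : ℕ) = j
  · have hrm : r < m := hi.trans_lt i.2
    have hrn : r < n := (hij ▸ hi).trans_lt j.2
    rw [abs_of_nonneg (hDnn i j)]
    refine (hDmono ⟨r, hrm⟩ i ⟨r, hrn⟩ j rfl hij hi).trans ?_
    refine hD.le_frobenius_norm_sub_of_rank_le hrm hrn (hDnn _ _) (fun k => ?_) hA
    rw [abs_of_nonneg (hDnn _ _)]
    exact hDmono _ _ _ _ rfl rfl (Nat.lt_succ_iff.1 k.2)
  · rw [hD i j hij, abs_zero]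
    exact norm_nonneg _

/-- `tailMask m r * M * tailMask n r` is the `(2,2)` block of `M`, padded with zeros. -/
def tailMask (n r : ℕ) : Matrix (Fin n) (Fin n) ℝ :=
  diagonal fun i => if r ≤ (i : ℕ) then 1 else 0

theorem tailMask_transpose : (tailMask n r)ᵀ = tailMask n r := diagonal_transpose _

theorem frobenius_norm_tailMask_mul_le {p : Type*} [Fintype p] (M : Matrix (Fin n) p ℝ) :
    ‖tailMask n r * M‖ ≤ ‖M‖ := by
  refine ((isRectDiag_diagonal _).frobenius_norm_mul_left_le zero_le_one (fun i j => ?_)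
    M).trans_eq (one_mul _)
  rw [diagonal_apply]
  split_ifs <;> norm_num

theorem sqrt_sum_tail_eq_frobenius_norm (M : Matrix (Fin m) (Fin n) ℝ) :
    √(∑ i : Fin m, ∑ j : Fin n, if r ≤ (i : ℕ) ∧ r ≤ (j : ℕ) then M i j ^ 2 else 0) =
      ‖tailMask m r * M * tailMask n r‖ := by
  rw [frobenius_norm_eq_sqrt]
  congr 1
  refine Finset.sum_congr rfl fun i _ => Finset.sum_congr rfl fun j _ => ?_
  simp only [tailMask, mul_diagonal, diagonal_mul]
  split_ifs <;> simp_all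

theorem IsRectDiag.tailMask_mul {D : Matrix (Fin m) (Fin n) ℝ} (hD : IsRectDiag D) :
    tailMask m r * D = tailMask m r * D * tailMask n r * tailMask n r := by
  ext i j
  simp only [tailMask, mul_diagonal, diagonal_mul]
  by_cases hij : (i : ℕ) = j
  · split_ifs <;> simp_all
  · simp [hD i j hij]

theorem frobenius_norm_tail_block_le (X₁ : Matrix (Fin m) (Fin r) ℝ)
    (Y₁ : Matrix (Fin n) (Fin r) ℝ) {s : Fin r → ℝ} {c : ℝ} (hc : 0 ≤ c) (hs : ∀ k, |s k| ≤ c) :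
    ‖tailMask m r * (X₁ * diagonal s * Y₁ᵀ) * tailMask n r‖ ≤
      c * ‖tailMask m r * X₁‖ * ‖tailMask n r * Y₁‖ :=
  calc _ = ‖tailMask m r * X₁ * diagonal s * (tailMask n r * Y₁)ᵀ‖ := by
        rw [transpose_mul, tailMask_transpose]
        simp only [Matrix.mul_assoc]
    _ ≤ ‖tailMask m r * X₁ * diagonal s‖ * ‖tailMask n r * Y₁‖ :=
        (frobenius_norm_mul _ _).trans_eq (by rw [frobenius_norm_transpose])
    _ ≤ c * ‖tailMask m r * X₁‖ * ‖tailMask n r * Y₁‖ := by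
        gcongr
        refine (isRectDiag_diagonal s).frobenius_norm_mul_right_le hc (fun i j => ?_) _
        rw [diagonal_apply]
        split_ifs with h
        · exact h ▸ hs i
        · simpa using hc

theorem mul_frobenius_norm_tailMask_mul_le (hm : r ≤ m) (hn : r ≤ n)
    {X : Matrix (Fin m) (Fin m) ℝ} {Y : Matrix (Fin n) (Fin n) ℝ} (hY : Yᵀ * Y = 1)
    (hY' : Y * Yᵀ = 1) {s : Fin r → ℝ}
    {σ c : ℝ} (hσ : 0 ≤ σ) (hs : ∀ k, σ ≤ |s k|) {D F : Matrix (Fin m) (Fin n) ℝ}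
    (hD : IsRectDiag D) (hc : 0 ≤ c)
    (hDc : ∀ (i : Fin m) (j : Fin n), r ≤ (i : ℕ) → r ≤ (j : ℕ) → |D i j| ≤ c)
    (hDF : D - F = X * finIncl hm * diagonal s * (Y * finIncl hn)ᵀ) :
    σ * ‖tailMask m r * (X * finIncl hm)‖ ≤ c * ‖tailMask n r * (Y * finIncl hn)‖ + ‖F‖ := by
  have hY₁ : (Y * finIncl hn)ᵀ * (Y * finIncl hn) = 1 := by
    rw [transpose_mul, Matrix.mul_assoc, ← Matrix.mul_assoc Yᵀ, hY, Matrix.one_mul,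
      finIncl_transpose_mul_self]
  have hAY : (D - F) * (Y * finIncl hn) = X * finIncl hm * diagonal s := by
    rw [hDF, Matrix.mul_assoc, hY₁, Matrix.mul_one]
  set T := tailMask m r * D * tailMask n r
  have hT : IsRectDiag T := fun i j hij => by
    simp only [T, tailMask, mul_diagonal, diagonal_mul, hD i j hij, mul_zero, zero_mul]
  have hTc : ∀ i j, |T i j| ≤ c := fun i j => by
    simp only [T, tailMask, mul_diagonal, diagonal_mul]
    split_ifs with hi hj
    · simpa using hDc i j hi hj
    all_goals simpa using hc
  calc σ * ‖tailMask m r * (X * finIncl hm)‖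
      ≤ ‖tailMask m r * (X * finIncl hm) * diagonal s‖ := le_frobenius_norm_mul_diagonal hσ hs _
    _ = ‖T * (tailMask n r * (Y * finIncl hn)) - tailMask m r * (F * Y * finIncl hn)‖ := by
        rw [Matrix.mul_assoc, ← hAY, Matrix.sub_mul, Matrix.mul_sub,
          ← Matrix.mul_assoc, hD.tailMask_mul]
        simp only [T, Matrix.mul_assoc]
    _ ≤ ‖T * (tailMask n r * (Y * finIncl hn))‖ + ‖tailMask m r * (F * Y * finIncl hn)‖ :=
        norm_sub_le _ _
    _ ≤ c * ‖tailMask n r * (Y * finIncl hn)‖ + ‖F‖ := by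
        gcongr
        · exact hT.frobenius_norm_mul_left_le hc hTc _
        · calc _ ≤ ‖F * Y * finIncl hn‖ := frobenius_norm_tailMask_mul_le _
            _ ≤ ‖F * Y‖ := frobenius_norm_mul_finIncl_le _ _
            _ = ‖F‖ := frobenius_norm_mul_of_mul_transpose_self hY' F

theorem sq_mul_frobenius_norm_tail_block_le (hm : r ≤ m) (hn : r ≤ n)
    {X : Matrix (Fin m) (Fin m) ℝ} {Y : Matrix (Fin n) (Fin n) ℝ}
    (hX : Xᵀ * X = 1) (hX' : X * Xᵀ = 1) (hY : Yᵀ * Y = 1) (hY' : Y * Yᵀ = 1)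
    {s : Fin r → ℝ} {σmin σmax : ℝ} (hσmax : 0 ≤ σmax)
    (hs : ∀ k, σmin ≤ |s k| ∧ |s k| ≤ σmax) {A D : Matrix (Fin m) (Fin n) ℝ}
    (hA : A = X * finIncl hm * diagonal s * (Y * finIncl hn)ᵀ) (hD : IsRectDiag D)
    (hDnn : ∀ i j, 0 ≤ D i j)
    (hDmono : ∀ (i i' : Fin m) (j j' : Fin n), (i : ℕ) = (j : ℕ) → (i' : ℕ) = (j' : ℕ) →
      (i : ℕ) ≤ (i' : ℕ) → D i' j' ≤ D i j)
    (hDA : 2 * ‖D - A‖ ≤ σmin) :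
    σmin ^ 2 * ‖tailMask m r * A * tailMask n r‖ ≤ 4 * σmax * ‖D - A‖ ^ 2 := by
  have hσmin : 0 ≤ σmin := (mul_nonneg zero_le_two (norm_nonneg _)).trans hDA
  have hrank : A.rank ≤ r := hA ▸ (rank_mul_le_left _ _).trans (rank_le_width _)
  have htail : ∀ (i : Fin m) (j : Fin n), r ≤ (i : ℕ) → r ≤ (j : ℕ) → |D i j| ≤ ‖D - A‖ :=
    fun i j hi _ => hD.abs_apply_le_frobenius_norm_sub_of_rank_le hDnn hDmono hrank i j hi
  have hx := mul_frobenius_norm_tailMask_mul_le (X := X) (D := D) (F := D - A) hm hn hY hY'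
    hσmin (fun k => (hs k).1) hD (norm_nonneg _) htail (by rw [sub_sub_cancel, hA])
  have hy := mul_frobenius_norm_tailMask_mul_le (X := Y) (D := Dᵀ) (F := (D - A)ᵀ) hn hm hX hX'
    hσmin (fun k => (hs k).1) hD.transpose (norm_nonneg _) (fun j i hj hi => htail i j hi hj)
    (by
      rw [← transpose_sub, sub_sub_cancel, hA]
      simp only [transpose_mul, transpose_transpose, diagonal_transpose, Matrix.mul_assoc])
  rw [frobenius_norm_transpose] at hy
  have hxy := sq_mul_mul_le_of_le_mul_add (norm_nonneg _) (norm_nonneg _) (norm_nonneg _) hDA hx hy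
  calc σmin ^ 2 * ‖tailMask m r * A * tailMask n r‖
      ≤ σmin ^ 2 *
          (σmax * ‖tailMask m r * (X * finIncl hm)‖ * ‖tailMask n r * (Y * finIncl hn)‖) := by
        rw [hA]
        gcongr
        exact frobenius_norm_tail_block_le _ _ hσmax fun k => (hs k).2
    _ = σmax * (σmin ^ 2 *
          (‖tailMask m r * (X * finIncl hm)‖ * ‖tailMask n r * (Y * finIncl hn)‖)) := by ring
    _ ≤ σmax * (4 * ‖D - A‖ ^ 2) := by gcongr
    _ = 4 * σmax * ‖D - A‖ ^ 2 := by ring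

end Matrix

/-- **Error induced by rotation-truncation-vectorization (Corollary 1).**
There is an absolute constant `C₂ > 0` such that: if `Θ*` has rank `r` with
singular values `σ 0 ≥ ⋯ ≥ σ (r-1) > 0` (exhibited by an SVD
`Θ* = U* D* (V*)ᵀ`), `Θ̂ = Û D̂ V̂ᵀ` is an SVD of the estimate, and
`‖Θ̂ − Θ*‖_F ≤ B` with `0 < B ≤ σ (r-1) / 2`, then the lower-right block of the
rotation `Θ*_r = Ûᵀ Θ* V̂` satisfies
`‖(Θ*_r)₂₂‖_F ≤ C₂ · (σ 0 / σ (r-1)²) · B²`. -/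
theorem rtv_error_induced :
    ∃ C₂ : ℝ, 0 < C₂ ∧
      ∀ (dx dφ r : ℕ), 0 < r → r ≤ dx → r ≤ dφ →
      ∀ (Ustar : Matrix (Fin dx) (Fin dx) ℝ) (Vstar : Matrix (Fin dφ) (Fin dφ) ℝ)
        (σ : ℕ → ℝ) (Dstar : Matrix (Fin dx) (Fin dφ) ℝ)
        (Θstar Θhat : Matrix (Fin dx) (Fin dφ) ℝ)
        (Uh : Matrix (Fin dx) (Fin dx) ℝ) (Dh : Matrix (Fin dx) (Fin dφ) ℝ)
        (Vh : Matrix (Fin dφ) (Fin dφ) ℝ) (B : ℝ),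
        -- SVD of the true rank-r matrix Θ*
        Ustarᵀ * Ustar = 1 → Ustar * Ustarᵀ = 1 →
        Vstarᵀ * Vstar = 1 → Vstar * Vstarᵀ = 1 →
        (∀ (i : Fin dx) (j : Fin dφ),
          Dstar i j = if (i : ℕ) = (j : ℕ) ∧ (i : ℕ) < r then σ (i : ℕ) else 0) →
        (∀ i j : ℕ, i ≤ j → j < r → σ j ≤ σ i) →
        0 < σ (r - 1) →
        Θstar = Ustar * Dstar * Vstarᵀ →
        -- SVD of the estimate Θ̂
        Uhᵀ * Uh = 1 → Uh * Uhᵀ = 1 →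
        Vhᵀ * Vh = 1 → Vh * Vhᵀ = 1 →
        (∀ (i : Fin dx) (j : Fin dφ), (i : ℕ) ≠ (j : ℕ) → Dh i j = 0) →
        (∀ (i : Fin dx) (j : Fin dφ), 0 ≤ Dh i j) →
        (∀ (i i' : Fin dx) (j j' : Fin dφ), (i : ℕ) = (j : ℕ) → (i' : ℕ) = (j' : ℕ) →
          (i : ℕ) ≤ (i' : ℕ) → Dh i' j' ≤ Dh i j) →
        Θhat = Uh * Dh * Vhᵀ →
        -- closeness of the estimate
        0 < B → B ≤ σ (r - 1) / 2 →
        Real.sqrt (∑ i, ∑ j, (Θhat - Θstar) i j ^ 2) ≤ B →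
        -- conclusion : Frobenius norm of the (2,2) block of Ûᵀ Θ* V̂
        Real.sqrt (∑ i : Fin dx, ∑ j : Fin dφ,
            if r ≤ (i : ℕ) ∧ r ≤ (j : ℕ) then ((Uhᵀ * Θstar * Vh) i j) ^ 2 else 0) ≤
          C₂ * (σ 0 / σ (r - 1) ^ 2) * B ^ 2 := by
  refine ⟨4, by norm_num, ?_⟩
  intro dx dφ r hr0 hrdx hrdφ Ustar Vstar σ Dstar Θstar Θhat Uh Dh Vh B
    hU1 hU2 hV1 hV2 hDstar hmono hσpos hΘs hUh1 hUh2 hVh1 hVh2 hDdiag hDnn hDmono hΘh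
    hB0 hBs hclose
  have hσ : ∀ k : Fin r, σ (r - 1) ≤ |σ k| ∧ |σ k| ≤ σ 0 := fun k => by
    have hlo := hmono k (r - 1) (by omega) (by omega)
    rw [abs_of_pos (hσpos.trans_le hlo)]
    exact ⟨hlo, hmono 0 k (Nat.zero_le _) k.2⟩
  have hσ0 : 0 ≤ σ 0 := hσpos.le.trans (hmono 0 (r - 1) (Nat.zero_le _) (by omega))
  have hA : Uhᵀ * Θstar * Vh = Uhᵀ * Ustar * finIncl hrdx * diagonal (fun k : Fin r => σ k) *
      (Vhᵀ * Vstar * finIncl hrdφ)ᵀ := by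
    rw [hΘs, eq_finIncl_mul_diagonal_mul_transpose hrdx hrdφ hDstar]
    simp only [transpose_mul, transpose_transpose, Matrix.mul_assoc]
  have hFB : ‖Dh - Uhᵀ * Θstar * Vh‖ ≤ B := by
    have hDh : Dh = Uhᵀ * Θhat * Vh := by
      rw [hΘh, Matrix.mul_assoc, Matrix.mul_assoc, hVh1, Matrix.mul_one, ← Matrix.mul_assoc, hUh1,
        Matrix.one_mul]
    rwa [hDh, ← Matrix.sub_mul, ← Matrix.mul_sub, frobenius_norm_transpose_mul_mul hUh2 hVh2,
      frobenius_norm_eq_sqrt]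
  have key := sq_mul_frobenius_norm_tail_block_le hrdx hrdφ
    (transpose_mul_transpose_mul_self hUh2 hU1) (transpose_mul_mul_transpose_self hUh1 hU2)
    (transpose_mul_transpose_mul_self hVh2 hV1) (transpose_mul_mul_transpose_self hVh1 hV2)
    hσ0 hσ hA hDdiag hDnn hDmono (by linarith)
  rw [sqrt_sum_tail_eq_frobenius_norm, show 4 * (σ 0 / σ (r - 1) ^ 2) * B ^ 2 =
    4 * σ 0 * B ^ 2 / σ (r - 1) ^ 2 by ring, le_div_iff₀ (by positivity), mul_comm]
  exact key.trans (by gcongr)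
end

section
/- Let k be a positive integer, Π a nonempty set (the set of policies), g : Π → ℝ^k a function, W ∈ ℝ^{k×k} a symmetric positive definite matrix, C ≥ 0, and θ*, θ̂ ∈ ℝ^k with ‖θ̂ − θ*‖_W ≤ C. Define the pessimistic value Ĵ(π) = inf{⟨g(π), θ⟩ : θ ∈ ℝ^k, ‖θ − θ̂‖_W ≤ C}, and suppose π̂ ∈ Π satisfies Ĵ(π̂) ≥ Ĵ(π) for all π ∈ Π. Then for every π* ∈ Π, the sub-optimality gap satisfies ⟨g(π*), θ*⟩ − ⟨g(π̂), θ*⟩ ≤ 2·C·‖g(π*)‖_{W^{-1}}. -/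
/-!
By Cauchy–Schwarz for the inner product `⟨x, y⟩_W = x ⬝ᵥ W *ᵥ y`, `|v ⬝ᵥ u| ≤ ‖v‖_{W⁻¹} ‖u‖_W`,
so on the confidence ball `‖θ - θ̂‖_W ≤ C` every value `v ⬝ᵥ θ` lies within `C ‖v‖_{W⁻¹}` of
`v ⬝ᵥ θ̂`. Since `θ*` is in the ball, `Ĵ(π̂) ≤ J_{θ*}(π̂)`, while
`Ĵ(π*) ≥ J_{θ̂}(π*) - C ‖g π*‖_{W⁻¹} ≥ J_{θ*}(π*) - 2 C ‖g π*‖_{W⁻¹}`; chaining these through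
`Ĵ(π*) ≤ Ĵ(π̂)` gives the bound.
-/

open Matrix

section MahalanobisNorm

variable {n : Type*} [Fintype n] [DecidableEq n] {W : Matrix n n ℝ}

theorem Matrix.PosDef.abs_dotProduct_le (hW : W.PosDef) (v u : n → ℝ) :
    |v ⬝ᵥ u| ≤ √(v ⬝ᵥ (W⁻¹ *ᵥ v)) * √(u ⬝ᵥ (W *ᵥ u)) := by
  set w := W⁻¹ *ᵥ v
  have hWw : W *ᵥ w = v := by
    rw [mulVec_mulVec, mul_nonsing_inv _ ((isUnit_iff_isUnit_det W).mp hW.isUnit), one_mulVec]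
  have hwu : w ⬝ᵥ (W *ᵥ u) = v ⬝ᵥ u := by
    rw [dotProduct_mulVec, ← mulVec_transpose, (isHermitian_iff_isSymm.mp hW.isHermitian).eq, hWw]
  have hcs := (toBilin' W).apply_mul_apply_le_of_forall_zero_le
    (fun x => by simpa [toBilin'_apply'] using hW.posSemidef.dotProduct_mulVec_nonneg x) w u
  simp only [toBilin'_apply', hwu, hWw, dotProduct_comm u v, dotProduct_comm w v] at hcs
  rw [← Real.sqrt_mul (by simpa using hW.inv.posSemidef.dotProduct_mulVec_nonneg v)]
  exact Real.abs_le_sqrt (by rwa [sq])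

theorem Matrix.PosDef.abs_dotProduct_sub_le (hW : W.PosDef) {C : ℝ} {θ θ' : n → ℝ}
    (h : √((θ - θ') ⬝ᵥ (W *ᵥ (θ - θ'))) ≤ C) (v : n → ℝ) :
    |v ⬝ᵥ θ - v ⬝ᵥ θ'| ≤ C * √(v ⬝ᵥ (W⁻¹ *ᵥ v)) := by
  rw [← dotProduct_sub, mul_comm]
  exact (hW.abs_dotProduct_le v _).trans (by gcongr)

end MahalanobisNorm

section PessimisticValue

variable {n : Type*} [Fintype n] [DecidableEq n] {W : Matrix n n ℝ} {θhat : n → ℝ} {C : ℝ}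

/-- The paper's pessimistic value `Ĵ(π)`, for a policy with feature vector `v = g π`. -/
noncomputable def pessimisticValue (W : Matrix n n ℝ) (θhat : n → ℝ) (C : ℝ) (v : n → ℝ) : ℝ :=
  sInf {y : ℝ | ∃ θ : n → ℝ, √((θ - θhat) ⬝ᵥ (W *ᵥ (θ - θhat))) ≤ C ∧ y = v ⬝ᵥ θ}

theorem pessimisticValue_le (hW : W.PosDef) {θ : n → ℝ}
    (hθ : √((θ - θhat) ⬝ᵥ (W *ᵥ (θ - θhat))) ≤ C) (v : n → ℝ) :
    pessimisticValue W θhat C v ≤ v ⬝ᵥ θ := by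
  refine csInf_le ⟨v ⬝ᵥ θhat - C * √(v ⬝ᵥ (W⁻¹ *ᵥ v)), ?_⟩ ⟨θ, hθ, rfl⟩
  rintro _ ⟨θ', hθ', rfl⟩
  linarith [(abs_le.mp (hW.abs_dotProduct_sub_le hθ' v)).1]

theorem sub_le_pessimisticValue (hW : W.PosDef) {θ : n → ℝ}
    (hθ : √((θ - θhat) ⬝ᵥ (W *ᵥ (θ - θhat))) ≤ C) (v : n → ℝ) :
    v ⬝ᵥ θhat - C * √(v ⬝ᵥ (W⁻¹ *ᵥ v)) ≤ pessimisticValue W θhat C v := by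
  refine le_csInf ⟨v ⬝ᵥ θ, θ, hθ, rfl⟩ ?_
  rintro _ ⟨θ', hθ', rfl⟩
  linarith [(abs_le.mp (hW.abs_dotProduct_sub_le hθ' v)).1]

end PessimisticValue

theorem pessimism_suboptimality_bound_general (k : ℕ)
    (Pol : Type*) (g : Pol → (Fin k → ℝ))
    (W : Matrix (Fin k) (Fin k) ℝ) (hW : W.PosDef)
    (C : ℝ) (θstar θhat : Fin k → ℝ)
    (hconf : Real.sqrt ((θhat - θstar) ⬝ᵥ (W *ᵥ (θhat - θstar))) ≤ C)
    (J : Pol → ℝ)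
    (hJ : ∀ π : Pol, J π = sInf {y : ℝ | ∃ θ : Fin k → ℝ,
        Real.sqrt ((θ - θhat) ⬝ᵥ (W *ᵥ (θ - θhat))) ≤ C ∧ y = g π ⬝ᵥ θ})
    (πhat : Pol) (hπhat : ∀ π : Pol, J π ≤ J πhat) :
    ∀ πstar : Pol,
      g πstar ⬝ᵥ θstar - g πhat ⬝ᵥ θstar ≤
        2 * C * Real.sqrt (g πstar ⬝ᵥ (W⁻¹ *ᵥ g πstar)) := by
  intro πstar
  have hJ : ∀ π, J π = pessimisticValue W θhat C (g π) := hJ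
  have hstar : √((θstar - θhat) ⬝ᵥ (W *ᵥ (θstar - θhat))) ≤ C := by
    rwa [← neg_sub θhat θstar, mulVec_neg, neg_dotProduct, dotProduct_neg, neg_neg]
  have hmax := hπhat πstar
  rw [hJ, hJ] at hmax
  have hhat := pessimisticValue_le hW hstar (g πhat)
  have hpess := sub_le_pessimisticValue hW hstar (g πstar)
  have hshift := (abs_le.mp (hW.abs_dotProduct_sub_le hconf (g πstar))).1
  linarith

/-- **Sub-optimality bound for the pessimistic policy (Theorem 2, deterministic core).**
Let `g : Π → ℝ^k` assign to each policy its expected feature vector, let `W` be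
symmetric positive definite, `C ≥ 0`, and suppose the true parameter satisfies
`‖θ̂ − θ*‖_W ≤ C`.  Define the pessimistic value
`Ĵ(π) = inf {⟨g(π), θ⟩ : ‖θ − θ̂‖_W ≤ C}` and let `π̂` maximize `Ĵ`.  Then for
every `π*`, `⟨g(π*), θ*⟩ − ⟨g(π̂), θ*⟩ ≤ 2 C ‖g(π*)‖_{W⁻¹}`. -/
theorem pessimism_suboptimality_bound (k : ℕ) (hk : 0 < k)
    (Pol : Type*) [Nonempty Pol] (g : Pol → (Fin k → ℝ))
    (W : Matrix (Fin k) (Fin k) ℝ) (hW : W.PosDef)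
    (C : ℝ) (hC : 0 ≤ C) (θstar θhat : Fin k → ℝ)
    (hconf : Real.sqrt ((θhat - θstar) ⬝ᵥ (W *ᵥ (θhat - θstar))) ≤ C)
    (J : Pol → ℝ)
    (hJ : ∀ π : Pol, J π = sInf {y : ℝ | ∃ θ : Fin k → ℝ,
        Real.sqrt ((θ - θhat) ⬝ᵥ (W *ᵥ (θ - θhat))) ≤ C ∧ y = g π ⬝ᵥ θ})
    (πhat : Pol) (hπhat : ∀ π : Pol, J π ≤ J πhat) :
    ∀ πstar : Pol,
      g πstar ⬝ᵥ θstar - g πhat ⬝ᵥ θstar ≤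
        2 * C * Real.sqrt (g πstar ⬝ᵥ (W⁻¹ *ᵥ g πstar)) :=
  pessimism_suboptimality_bound_general k Pol g W hW C θstar θhat hconf J hJ πhat hπhat
end
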